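/- arXiv:1503.03820 — 2 statements merged into one kernel-verified Lean document; each statement's English description precedes it below -/
import Mathlib

section
/- For any finite set X, the internal coproduct Γ on the free vector space on topologies on X, defined by Γ(T) = Σ_{T' ⊚≺ T} T' ⊗ (T/T'), is coassociative. -/
variable {X : Type*}

/-- The specialization quasi-order of a topology: `x ≤_T y` iff every
`T`-open set containing `x` contains `y`. -/
def leT (t : TopologicalSpace X) (x y : X) : Prop :=
  ∀ U : Set X, t.IsOpen U → x ∈ U → y ∈ U

/-- The specialization equivalence `∼_T`. -/
def simT (t : TopologicalSpace X) (x y : X) : Prop :=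
  leT t x y ∧ leT t y x

/-- The topology of final segments of a relation `r`. -/
def topOfRel (r : X → X → Prop) : TopologicalSpace X where
  IsOpen U := ∀ x ∈ U, ∀ y, r x y → y ∈ U
  isOpen_univ := fun _ _ y _ => Set.mem_univ y
  isOpen_inter := fun U V hU hV x hx y hr => ⟨hU x hx.1 y hr, hV x hx.2 y hr⟩
  isOpen_sUnion := fun S hS x hx y hr => by
    obtain ⟨U, hU, hxU⟩ := hx
    exact ⟨U, hU, hS U hU x hxU y hr⟩

/-- `T'` is finer than `T`: every `T`-open set is `T'`-open. -/
def finer (t' t : TopologicalSpace X) : Prop :=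
  ∀ U : Set X, t.IsOpen U → t'.IsOpen U

/-- The quasi-order of the quotient topology `T/T'`: the transitive closure of
`x R y ↔ (x ≤_T y or y ≤_{T'} x)`. -/
def quotRel (t t' : TopologicalSpace X) : X → X → Prop :=
  Relation.ReflTransGen (fun x y => leT t x y ∨ leT t' y x)

/-- The quotient topology `T/T'`. -/
def quotTop (t t' : TopologicalSpace X) : TopologicalSpace X :=
  topOfRel (quotRel t t')

/-- Restriction (subspace topology) of `t` to a subset `Y`. -/
def restrictT (t : TopologicalSpace X) (Y : Set X) : TopologicalSpace Y :=
  t.induced Subtype.val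

/-- `T'` is `T`-admissible (`T' ⊚≺ T`). -/
def adm (t' t : TopologicalSpace X) : Prop :=
  finer t' t ∧
  (∀ Y : Set X, @IsConnected X t' Y → restrictT t' Y = restrictT t Y) ∧
  (∀ x y : X,
    (quotRel t t' x y ∧ quotRel t t' y x) ↔ (quotRel t' t' x y ∧ quotRel t' t' y x))

open scoped TensorProduct

/-- The free vector space on the set of topologies on `X`. -/
abbrev TVect (X : Type*) := TopologicalSpace X →₀ ℚ

/-- The internal coproduct on basis elements. -/
noncomputable def GamFun (t : TopologicalSpace X) : TVect X ⊗[ℚ] TVect X :=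
  ∑ᶠ (t' : TopologicalSpace X) (_ : adm t' t),
    (Finsupp.single t' (1 : ℚ)) ⊗ₜ[ℚ] (Finsupp.single (quotTop t t') (1 : ℚ))

/-- The internal coproduct as a linear map. -/
noncomputable def GamLin (X : Type*) : TVect X →ₗ[ℚ] TVect X ⊗[ℚ] TVect X :=
  Finsupp.lsum ℚ (fun t => LinearMap.smulRight (LinearMap.id : ℚ →ₗ[ℚ] ℚ) (GamFun t))

/-!
On a finite set a topology is determined by its specialization preorder `leT`, and everything in
sight is order theory: `T'` is `T`-admissible iff `≤_{T'} ⊆ ≤_T`, the two preorders agree along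
`≤_{T'}`-zigzags (the `T'`-connected components), and every cycle of `≤_{T/T'}` stays inside one
such zigzag class. Coassociativity is then a bijection between the chains `T'' ⊚≺ T' ⊚≺ T` and
the pairs `U ⊚≺ T`, `S ⊚≺ T/U`, namely `(T', T'') ↦ (T'', T'/T'')` with inverse
`(U, S) ↦ (S ⊓ T, U)`, under which `T/T' = (T/T'')/(T'/T'')`.
-/

open Relation

section Relations
variable {α : Type*}

def Zigzag (r : α → α → Prop) : α → α → Prop :=
  ReflTransGen (SymmGen r)

def QuotGen (a c : α → α → Prop) : α → α → Prop :=
  ReflTransGen (fun x y => a x y ∨ c y x)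

/-- The relational form of `adm` (see `adm_iff_isAdmissible`): `Zigzag c` relates the points of
one `c`-connected component, and `QuotGen a c` is the specialization preorder of `a / c`. -/
structure IsAdmissible (c a : α → α → Prop) : Prop where
  le : c ≤ a
  eq_on_zigzag : ∀ ⦃x y⦄, Zigzag c x y → a x y → c x y
  zigzag_of_quotGen : ∀ ⦃x y⦄, QuotGen a c x y → QuotGen a c y x → Zigzag c x y

variable {a b c e s : α → α → Prop} {x y : α}

namespace Zigzag

theorem of_rel (h : c x y) : Zigzag c x y :=
  ReflTransGen.single (.of_rel h)

theorem symm (h : Zigzag c x y) : Zigzag c y x :=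
  Std.Symm.symm (r := ReflTransGen (SymmGen c)) x y h

theorem trans {z : α} (hxy : Zigzag c x y) (hyz : Zigzag c y z) : Zigzag c x z :=
  ReflTransGen.trans hxy hyz

theorem lift (hcb : ∀ u v, c u v → Zigzag b u v) : Zigzag c x y → Zigzag b x y :=
  reflTransGen_closed (fun u v huv => huv.elim (hcb u v) fun h => (hcb v u h).symm) x y

theorem quotGen (hca : c ≤ a) (h : Zigzag c x y) : QuotGen a c x y :=
  ReflTransGen.mono (fun u v huv => huv.imp_left (hca u v)) x y h

end Zigzag

namespace QuotGen

theorem of_left (h : a x y) : QuotGen a c x y :=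
  ReflTransGen.single (Or.inl h)

theorem of_right (h : c y x) : QuotGen a c x y :=
  ReflTransGen.single (Or.inr h)

theorem trans {z : α} (hxy : QuotGen a c x y) (hyz : QuotGen a c y z) : QuotGen a c x z :=
  ReflTransGen.trans hxy hyz

theorem mono {a' c' : α → α → Prop} (ha : a ≤ a') (hc : c ≤ c') (h : QuotGen a c x y) :
    QuotGen a' c' x y :=
  ReflTransGen.mono (fun u v huv => huv.imp (ha u v) (hc v u)) x y h

theorem zigzag (hcb : c ≤ b) (h : QuotGen b c x y) : Zigzag b x y :=
  ReflTransGen.mono (fun u v huv => huv.imp_right (hcb v u)) x y h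

theorem swap (hca : c ≤ a) (h : QuotGen b c y x) : QuotGen a b x y :=
  ReflTransGen.mono (fun u v (huv : b v u ∨ c u v) => huv.symm.imp_left (hca u v)) x y
    (ReflTransGen.swap x y h)

theorem mono_left_of_zigzag (hab : ∀ u v, Zigzag e u v → a u v → b u v)
    (h : QuotGen a c x y) (hmid : ∀ z, QuotGen a c x z → QuotGen a c z y → Zigzag e x z) :
    QuotGen b c x y := by
  induction h using ReflTransGen.head_induction_on with
  | refl => exact ReflTransGen.refl
  | @head x w hxw hwy ih =>
    -- both ends of the first step are `e`-zigzag-connected to `x`, hence to each other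
    have hzig : Zigzag e x w := hmid w (ReflTransGen.single hxw) hwy
    have hwy' := ih fun z hwz hzy => hzig.symm.trans (hmid z (hwz.head hxw) hzy)
    rcases hxw with hxw | hwx
    · exact hwy'.head (Or.inl (hab x w hzig hxw))
    · exact hwy'.head (Or.inr hwx)

end QuotGen

theorem zigzag_quotGen_iff (hcb : c ≤ b) : Zigzag (QuotGen b c) x y ↔ Zigzag b x y :=
  ⟨Zigzag.lift fun _ _ => QuotGen.zigzag hcb,
    Zigzag.lift fun _ _ h => Zigzag.of_rel (QuotGen.of_left h)⟩

theorem quotGen_quotGen_iff (hcb : c ≤ b) (hba : b ≤ a) :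
    QuotGen (QuotGen a c) (QuotGen b c) x y ↔ QuotGen a b x y :=
  ⟨reflTransGen_closed (fun _ _ huv => huv.elim (QuotGen.mono le_rfl hcb)
      (QuotGen.swap (hcb.trans hba))) x y,
    QuotGen.mono (fun _ _ => QuotGen.of_left) fun _ _ => QuotGen.of_left⟩

namespace IsAdmissible

theorem quotGen_of_cycle (hba : IsAdmissible b a) (hcb : c ≤ b) (hxy : QuotGen a c x y)
    (hyx : QuotGen a b y x) : QuotGen b c x y :=
  hxy.mono_left_of_zigzag (fun _ _ h => hba.eq_on_zigzag h) fun _ hxz hzy =>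
    hba.zigzag_of_quotGen (hxz.mono le_rfl hcb) ((hzy.mono le_rfl hcb).trans hyx)

variable (hcb : IsAdmissible c b) (hba : IsAdmissible b a)
include hcb hba

theorem trans : IsAdmissible c a where
  le := hcb.le.trans hba.le
  eq_on_zigzag _ _ hxy h :=
    hcb.eq_on_zigzag hxy (hba.eq_on_zigzag (hxy.lift fun _ _ h => .of_rel (hcb.le _ _ h)) h)
  zigzag_of_quotGen _ _ hxy hyx :=
    hcb.zigzag_of_quotGen (hba.quotGen_of_cycle hcb.le hxy (hyx.mono le_rfl hcb.le))
      (hba.quotGen_of_cycle hcb.le hyx (hxy.mono le_rfl hcb.le))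

theorem quotGen : IsAdmissible (QuotGen b c) (QuotGen a c) where
  le _ _ := QuotGen.mono hba.le le_rfl
  eq_on_zigzag _ _ hxy h :=
    hba.quotGen_of_cycle hcb.le h (((zigzag_quotGen_iff hcb.le).1 hxy).symm.quotGen hba.le)
  zigzag_of_quotGen _ _ hxy hyx := (zigzag_quotGen_iff hcb.le).2 <|
    hba.zigzag_of_quotGen ((quotGen_quotGen_iff hcb.le hba.le).1 hxy)
      ((quotGen_quotGen_iff hcb.le hba.le).1 hyx)

theorem quotGen_inf : QuotGen b c ⊓ a = b := by
  ext x y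
  exact ⟨fun h => hba.eq_on_zigzag (h.1.zigzag hcb.le) h.2, fun h => ⟨.of_left h, hba.le x y h⟩⟩

end IsAdmissible

section Reconstruction
variable (hca : IsAdmissible c a) (hs : IsAdmissible s (QuotGen a c))
include hca hs

theorem le_of_zigzag_of_isAdmissible_quotGen (h : Zigzag c x y) : s x y :=
  hs.eq_on_zigzag (hs.zigzag_of_quotGen (.of_left (h.quotGen hca.le))
    (.of_left (h.symm.quotGen hca.le))) (h.quotGen hca.le)

theorem le_inf_of_isAdmissible_quotGen : c ≤ s ⊓ a := fun _ _ h =>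
  ⟨le_of_zigzag_of_isAdmissible_quotGen hca hs (.of_rel h), hca.le _ _ h⟩

variable [IsPreorder α s]

theorem quotGen_inf_eq_of_isAdmissible_quotGen : QuotGen (s ⊓ a) c = s := by
  ext x y
  constructor
  · intro h
    rw [← reflTransGen_eq_self (r := s)]
    exact ReflTransGen.mono (fun u v huv => huv.elim (·.1) fun hvu =>
      le_of_zigzag_of_isAdmissible_quotGen hca hs (Zigzag.of_rel hvu).symm) x y h
  · intro hxy
    exact (hs.le x y hxy).mono_left_of_zigzag
      (fun u v huv h => ⟨hs.eq_on_zigzag huv (.of_left h), h⟩) fun z hxz hzy =>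
        hs.zigzag_of_quotGen (.of_left hxz) ((QuotGen.of_left hzy).trans (QuotGen.of_right hxy))

theorem zigzag_inf_iff_of_isAdmissible_quotGen : Zigzag (s ⊓ a) x y ↔ Zigzag s x y := by
  refine ⟨Zigzag.lift fun u v h => .of_rel h.1, Zigzag.lift fun u v h => ?_⟩
  rw [← quotGen_inf_eq_of_isAdmissible_quotGen hca hs] at h
  exact h.zigzag (le_inf_of_isAdmissible_quotGen hca hs)

theorem isAdmissible_inf_left_of_isAdmissible_quotGen : IsAdmissible (s ⊓ a) a where
  le _ _ h := h.2
  eq_on_zigzag _ _ hxy h :=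
    ⟨hs.eq_on_zigzag ((zigzag_inf_iff_of_isAdmissible_quotGen hca hs).1 hxy) (.of_left h), h⟩
  zigzag_of_quotGen _ _ hxy hyx := (zigzag_inf_iff_of_isAdmissible_quotGen hca hs).2 <|
    hs.zigzag_of_quotGen (hxy.mono (fun _ _ => .of_left) fun _ _ h => h.1)
      (hyx.mono (fun _ _ => .of_left) fun _ _ h => h.1)

theorem isAdmissible_inf_right_of_isAdmissible_quotGen : IsAdmissible c (s ⊓ a) where
  le := le_inf_of_isAdmissible_quotGen hca hs
  eq_on_zigzag _ _ hxy h := hca.eq_on_zigzag hxy h.2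
  zigzag_of_quotGen x y hxy hyx := by
    rw [quotGen_inf_eq_of_isAdmissible_quotGen hca hs] at hxy hyx
    exact hca.zigzag_of_quotGen (hs.le x y hxy) (hs.le y x hyx)

end Reconstruction

end Relations

section Topologies

theorem leT_iff_specializes {t : TopologicalSpace X} {x y : X} :
    leT t x y ↔ @Specializes X t y x :=
  (@specializes_iff_forall_open X t y x).symm

instance (t : TopologicalSpace X) : IsPreorder X (leT t) where
  refl _ _ _ hx := hx
  trans _ _ _ hxy hyz U hU hx := hyz U hU (hxy U hU hx)

theorem isOpen_iff_forall_leT [Finite X] {t : TopologicalSpace X} {U : Set X} :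
    t.IsOpen U ↔ ∀ x ∈ U, ∀ y, leT t x y → y ∈ U := by
  refine (@isOpen_iff_forall_specializes X t _ U).trans ?_
  simp only [← leT_iff_specializes]
  exact ⟨fun h x hx y hxy => h y x hxy hx, fun h x y hxy hy => h y hy x hxy⟩

theorem TopologicalSpace.ext_leT [Finite X] {t t' : TopologicalSpace X} (h : leT t = leT t') :
    t = t' :=
  TopologicalSpace.ext <| funext fun _ => propext <| by
    show t.IsOpen _ ↔ t'.IsOpen _
    rw [isOpen_iff_forall_leT, isOpen_iff_forall_leT, h]

theorem finer_iff_leT_le [Finite X] {t t' : TopologicalSpace X} : finer t' t ↔ leT t' ≤ leT t :=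
  ⟨fun h _ _ hxy U hU => hxy U (h U hU), fun h U hU =>
    isOpen_iff_forall_leT.2 fun x hx y hxy => h x y hxy U hU hx⟩

theorem leT_topOfRel {r : X → X → Prop} : leT (topOfRel r) = ReflTransGen r := by
  ext x y
  refine ⟨fun h => h {z | ReflTransGen r x z} (fun _ hu _ => hu.tail) .refl, fun h => ?_⟩
  induction h with
  | refl => exact refl_of (leT _) x
  | tail _ hyz ih => exact fun U hU hx => hU _ (ih U hU hx) _ hyz

theorem leT_quotTop (t t' : TopologicalSpace X) : leT (quotTop t t') = QuotGen (leT t) (leT t') :=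
  leT_topOfRel.trans (reflTransGen_eq_self (r := ReflTransGen _))

theorem leT_inf (s t : TopologicalSpace X) : leT (s ⊓ t) = leT s ⊓ leT t := by
  ext x y
  refine ⟨fun h => ⟨fun U hU => h U (TopologicalSpace.le_def.1 inf_le_left U hU),
    fun U hU => h U (TopologicalSpace.le_def.1 inf_le_right U hU)⟩, fun ⟨hs, ht⟩ => ?_⟩
  rw [leT_iff_specializes, @specializes_iff_nhds X (s ⊓ t), @nhds_inf X s t y, @nhds_inf X s t x]
  exact inf_le_inf ((@specializes_iff_nhds X s _ _).1 (leT_iff_specializes.1 hs))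
    ((@specializes_iff_nhds X t _ _).1 (leT_iff_specializes.1 ht))

theorem leT_restrictT {t : TopologicalSpace X} {Y : Set X} {p q : Y} :
    leT (restrictT t Y) p q ↔ leT t p q :=
  ⟨fun h U hU => h _ ⟨U, hU, rfl⟩, fun h _ ⟨U, hU, hV⟩ => hV ▸ h U hU⟩

theorem restrictT_eq_iff [Finite X] {t t' : TopologicalSpace X} {Y : Set X} :
    restrictT t' Y = restrictT t Y ↔ ∀ p q : Y, leT t' p q ↔ leT t p q := by
  refine ⟨fun h p q => ?_, fun h => TopologicalSpace.ext_leT ?_⟩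
  · rw [← leT_restrictT, h, leT_restrictT]
  · ext p q
    rw [leT_restrictT, leT_restrictT, h]

theorem isPathConnected_setOf_zigzag (t : TopologicalSpace X) (x : X) :
    @IsPathConnected X t {z | Zigzag (leT t) x z} := by
  let _ := t
  refine ⟨x, ReflTransGen.refl, fun {z} hz => ?_⟩
  induction hz with
  | refl => exact JoinedIn.refl ReflTransGen.refl
  | @tail u v hxu huv ih =>
    have hv : Zigzag (leT t) x v := hxu.tail huv
    refine ih.trans (huv.elim (fun h => ?_) fun h => ?_)
    · exact ((leT_iff_specializes.1 h).joinedIn hv hxu).symm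
    · exact (leT_iff_specializes.1 h).joinedIn hxu hv

theorem zigzag_of_isPreconnected [Finite X] {t : TopologicalSpace X} {Y : Set X}
    (hY : @IsPreconnected X t Y) {x y : X} (hx : x ∈ Y) (hy : y ∈ Y) : Zigzag (leT t) x y := by
  let _ := t
  have hopen : IsOpen {z | Zigzag (leT t) x z} :=
    isOpen_iff_forall_leT (t := t) |>.2 fun _ hz _ hzw => hz.tail (.of_rel hzw)
  have hclosed : IsClosed {z | Zigzag (leT t) x z} := isOpen_compl_iff.1 <|
    isOpen_iff_forall_leT (t := t) |>.2 fun _ hz _ hzw hw => hz (hw.tail (.of_rel_symm hzw))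
  exact hY.subset_isClopen ⟨hclosed, hopen⟩ ⟨x, hx, ReflTransGen.refl⟩ hy

theorem adm_iff_isAdmissible [Finite X] {t t' : TopologicalSpace X} :
    adm t' t ↔ IsAdmissible (leT t') (leT t) := by
  constructor
  · rintro ⟨hfin, hconn, hquot⟩
    refine ⟨finer_iff_leT_le.1 hfin, fun x y hxy h => ?_,
      fun x y hxy hyx => ((hquot x y).1 ⟨hxy, hyx⟩).1⟩
    have hrestr := hconn _ (isPathConnected_setOf_zigzag t' x).isConnected
    exact (restrictT_eq_iff.1 hrestr ⟨x, ReflTransGen.refl⟩ ⟨y, hxy⟩).2 h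
  · intro h
    refine ⟨finer_iff_leT_le.2 h.le, fun Y hY => restrictT_eq_iff.2 fun p q => ?_, fun x y => ?_⟩
    · exact ⟨h.le p q, h.eq_on_zigzag (zigzag_of_isPreconnected hY.isPreconnected p.2 q.2)⟩
    · exact ⟨fun ⟨hxy, hyx⟩ => ⟨h.zigzag_of_quotGen hxy hyx, h.zigzag_of_quotGen hyx hxy⟩,
        fun ⟨hxy, hyx⟩ => ⟨Zigzag.quotGen h.le hxy, Zigzag.quotGen h.le hyx⟩⟩

end Topologies

section Admissibility
variable [Finite X] {t t' t'' u s : TopologicalSpace X}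

theorem adm.trans (h₂ : adm t'' t') (h₁ : adm t' t) : adm t'' t :=
  adm_iff_isAdmissible.2 ((adm_iff_isAdmissible.1 h₂).trans (adm_iff_isAdmissible.1 h₁))

theorem adm_quotTop_quotTop (h₂ : adm t'' t') (h₁ : adm t' t) :
    adm (quotTop t' t'') (quotTop t t'') := by
  rw [adm_iff_isAdmissible, leT_quotTop, leT_quotTop]
  exact (adm_iff_isAdmissible.1 h₂).quotGen (adm_iff_isAdmissible.1 h₁)

theorem quotTop_quotTop (h₂ : adm t'' t') (h₁ : adm t' t) :
    quotTop (quotTop t t'') (quotTop t' t'') = quotTop t t' := by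
  refine TopologicalSpace.ext_leT ?_
  ext x y
  rw [leT_quotTop, leT_quotTop, leT_quotTop, leT_quotTop]
  exact quotGen_quotGen_iff (adm_iff_isAdmissible.1 h₂).le (adm_iff_isAdmissible.1 h₁).le

theorem quotTop_inf (h₂ : adm t'' t') (h₁ : adm t' t) : quotTop t' t'' ⊓ t = t' := by
  refine TopologicalSpace.ext_leT ?_
  rw [leT_inf, leT_quotTop]
  exact (adm_iff_isAdmissible.1 h₂).quotGen_inf (adm_iff_isAdmissible.1 h₁)

theorem adm.isAdmissible_quotGen (hs : adm s (quotTop t u)) :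
    IsAdmissible (leT s) (QuotGen (leT t) (leT u)) :=
  leT_quotTop t u ▸ adm_iff_isAdmissible.1 hs

section Reconstruction
variable (hu : adm u t) (hs : adm s (quotTop t u))
include hu hs

theorem adm_inf_left_of_adm_quotTop : adm (s ⊓ t) t := by
  rw [adm_iff_isAdmissible, leT_inf]
  exact isAdmissible_inf_left_of_isAdmissible_quotGen (adm_iff_isAdmissible.1 hu)
    hs.isAdmissible_quotGen

theorem adm_inf_right_of_adm_quotTop : adm u (s ⊓ t) := by
  rw [adm_iff_isAdmissible, leT_inf]
  exact isAdmissible_inf_right_of_isAdmissible_quotGen (adm_iff_isAdmissible.1 hu)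
    hs.isAdmissible_quotGen

theorem quotTop_inf_eq_of_adm_quotTop : quotTop (s ⊓ t) u = s := by
  refine TopologicalSpace.ext_leT ?_
  rw [leT_quotTop, leT_inf]
  exact quotGen_inf_eq_of_isAdmissible_quotGen (adm_iff_isAdmissible.1 hu)
    hs.isAdmissible_quotGen

end Reconstruction

instance : Finite (TopologicalSpace X) :=
  Finite.of_injective (fun t : TopologicalSpace X => t.IsOpen) fun _ _ => TopologicalSpace.ext

open Classical in
theorem sum_adm_adm_eq_sum_adm_adm_quotTop [Fintype (TopologicalSpace X)] {M : Type*}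
    [AddCommMonoid M] (f : TopologicalSpace X → TopologicalSpace X → TopologicalSpace X → M)
    (t : TopologicalSpace X) :
    ∑ t' with adm t' t, ∑ t'' with adm t'' t', f t'' (quotTop t' t'') (quotTop t t') =
      ∑ u with adm u t, ∑ s with adm s (quotTop t u), f u s (quotTop (quotTop t u) s) := by
  rw [Finset.sum_sigma', Finset.sum_sigma']
  refine Finset.sum_nbij' (fun p => ⟨p.2, quotTop p.1 p.2⟩) (fun q => ⟨q.2 ⊓ t, q.1⟩)
    ?_ ?_ ?_ ?_ ?_ <;>
    simp only [Finset.mem_sigma, Finset.mem_filter, Finset.mem_univ, true_and]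
  · exact fun p ⟨h₁, h₂⟩ => ⟨h₂.trans h₁, adm_quotTop_quotTop h₂ h₁⟩
  · exact fun q ⟨hu, hs⟩ => ⟨adm_inf_left_of_adm_quotTop hu hs, adm_inf_right_of_adm_quotTop hu hs⟩
  · exact fun p ⟨h₁, h₂⟩ => Sigma.ext (quotTop_inf h₂ h₁) HEq.rfl
  · exact fun q ⟨hu, hs⟩ => Sigma.ext rfl (heq_of_eq (quotTop_inf_eq_of_adm_quotTop hu hs))
  · exact fun p ⟨h₁, h₂⟩ => by rw [quotTop_quotTop h₂ h₁]

end Admissibility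

theorem GamLin_single (t : TopologicalSpace X) (r : ℚ) :
    GamLin X (Finsupp.single t r) = r • GamFun t := by
  simp [GamLin]

open Classical in
theorem GamFun_eq_sum [Fintype (TopologicalSpace X)] (t : TopologicalSpace X) :
    GamFun t = ∑ t' with adm t' t,
      Finsupp.single t' (1 : ℚ) ⊗ₜ[ℚ] Finsupp.single (quotTop t t') (1 : ℚ) :=
  finsum_cond_eq_sum_of_cond_iff _ fun _ => by simp

open Classical in
theorem assoc_map_GamLin_id_GamFun [Fintype (TopologicalSpace X)] (t : TopologicalSpace X) :
    TensorProduct.assoc ℚ (TVect X) (TVect X) (TVect X)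
        (TensorProduct.map (GamLin X) LinearMap.id (GamFun t)) =
      ∑ t' with adm t' t, ∑ t'' with adm t'' t', Finsupp.single t'' (1 : ℚ) ⊗ₜ[ℚ]
        (Finsupp.single (quotTop t' t'') (1 : ℚ) ⊗ₜ[ℚ] Finsupp.single (quotTop t t') (1 : ℚ)) := by
  simp only [GamFun_eq_sum, map_sum, TensorProduct.map_tmul, GamLin_single, one_smul,
    TensorProduct.sum_tmul, TensorProduct.assoc_tmul, LinearMap.id_apply]

open Classical in
theorem map_id_GamLin_GamFun [Fintype (TopologicalSpace X)] (t : TopologicalSpace X) :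
    TensorProduct.map LinearMap.id (GamLin X) (GamFun t) =
      ∑ u with adm u t, ∑ s with adm s (quotTop t u), Finsupp.single u (1 : ℚ) ⊗ₜ[ℚ]
        (Finsupp.single s (1 : ℚ) ⊗ₜ[ℚ] Finsupp.single (quotTop (quotTop t u) s) (1 : ℚ)) := by
  simp only [GamFun_eq_sum, map_sum, TensorProduct.map_tmul, GamLin_single, one_smul,
    TensorProduct.tmul_sum, LinearMap.id_apply]

/-- The internal coproduct `Γ` is coassociative. -/
theorem GamLin_coassoc (X : Type*) [Finite X] :
    (TensorProduct.assoc ℚ (TVect X) (TVect X) (TVect X)).toLinearMap ∘ₗ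
        (TensorProduct.map (GamLin X) LinearMap.id) ∘ₗ GamLin X =
      (TensorProduct.map LinearMap.id (GamLin X)) ∘ₗ GamLin X := by
  have := Fintype.ofFinite (TopologicalSpace X)
  refine Finsupp.lhom_ext fun t r => ?_
  simp only [LinearMap.comp_apply, GamLin_single, map_smul, LinearEquiv.coe_coe]
  rw [assoc_map_GamLin_id_GamFun, map_id_GamLin_GamFun,
    sum_adm_adm_eq_sum_adm_adm_quotTop (fun u s w => Finsupp.single u (1 : ℚ) ⊗ₜ[ℚ]
      (Finsupp.single s (1 : ℚ) ⊗ₜ[ℚ] Finsupp.single w (1 : ℚ)))]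
end

section
/- A topology T on a finite set X satisfies Γ(T) = T ⊗ T (i.e. T is group-like for the internal coproduct) if and only if its specialization quasi-order ≤_T is an equivalence relation, i.e. the restriction of T to each connected component is the coarse topology. -/
variable {X : Type*}

open scoped TensorProduct

/-! ### Auxiliary lemmas -/

lemma leT_refl' (t : TopologicalSpace X) (x : X) : leT t x x := fun _ _ h => h

lemma leT_trans' (t : TopologicalSpace X) {x y z : X} (h1 : leT t x y) (h2 : leT t y z) :
    leT t x z := fun U hU hx => h2 U hU (h1 U hU hx)

instance [Finite X] : Finite (TopologicalSpace X) :=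
  Finite.of_injective (fun t : TopologicalSpace X => t.IsOpen)
    fun _ _ h => TopologicalSpace.ext h

/-- On a finite set, a set is open iff it is an up-set for the specialization
quasi-order. -/
lemma isOpen_iff_leT [Finite X] (t : TopologicalSpace X) (U : Set X) :
    t.IsOpen U ↔ ∀ x ∈ U, ∀ y, leT t x y → y ∈ U := by
  letI := t
  constructor
  · exact fun hU x hx y hy => hy U hU hx
  · intro h
    have hrw : U = ⋃ x ∈ U, ⋂₀ {V : Set X | IsOpen V ∧ x ∈ V} := by
      ext z
      simp only [Set.mem_iUnion, Set.mem_sInter, Set.mem_setOf_eq]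
      constructor
      · exact fun hz => ⟨z, hz, fun V hV => hV.2⟩
      · rintro ⟨x, hx, hz⟩
        exact h x hx z (fun V hV hxV => hz V ⟨hV, hxV⟩)
    rw [hrw]
    exact isOpen_biUnion fun x _ => isOpen_sInter fun V hV => hV.1

lemma mem_connectedComponent_of_leT (t : TopologicalSpace X) {x y : X} (h : leT t x y) :
    y ∈ @connectedComponent X t x := by
  letI := t
  have hpc : IsPreconnected ({x, y} : Set X) := by
    intro U V hU hV _ h1 h2
    obtain ⟨a, haS, haU⟩ := h1
    obtain ⟨b, hbS, hbV⟩ := h2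
    have hyU : y ∈ U := by
      rcases haS with rfl | haS
      · exact h U hU haU
      · rwa [Set.mem_singleton_iff.mp haS] at haU
    have hyV : y ∈ V := by
      rcases hbS with rfl | hbS
      · exact h V hV hbV
      · rwa [Set.mem_singleton_iff.mp hbS] at hbV
    exact ⟨y, Set.mem_insert_of_mem _ rfl, hyU, hyV⟩
  exact hpc.subset_connectedComponent (Set.mem_insert x {y}) (Set.mem_insert_of_mem _ rfl)

/-- A step of the base relation keeps us in the same connected component. -/
lemma connectedComponent_eq_of_base (t : TopologicalSpace X) {x y : X}
    (h : leT t x y ∨ leT t y x) :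
    @connectedComponent X t x = @connectedComponent X t y := by
  letI := t
  rcases h with h | h
  · exact connectedComponent_eq (mem_connectedComponent_of_leT t h)
  · exact (connectedComponent_eq (mem_connectedComponent_of_leT t h)).symm

lemma mem_connectedComponent_of_quotRel_self (t : TopologicalSpace X) {x y : X}
    (h : quotRel t t x y) : y ∈ @connectedComponent X t x := by
  letI := t
  induction h with
  | refl => exact mem_connectedComponent
  | tail _ hstep ih =>
    have hc := connectedComponent_eq ih
    rw [hc, connectedComponent_eq_of_base t hstep]
    exact mem_connectedComponent

lemma leT_of_finer {t t' : TopologicalSpace X} (hf : finer t' t) {x y : X}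
    (h : leT t' x y) : leT t x y :=
  fun U hU hx => h U (hf U hU) hx

lemma adm_self (t : TopologicalSpace X) : adm t t :=
  ⟨fun _ h => h, fun _ _ => rfl, fun _ _ => Iff.rfl⟩

lemma quotRel_iff_of_symm {t t' : TopologicalSpace X} (hs : Symmetric (leT t))
    (hf : finer t' t) {x y : X} : quotRel t t' x y ↔ leT t x y := by
  constructor
  · intro h
    induction h with
    | refl => exact leT_refl' t x
    | tail _ hstep ih =>
      rcases hstep with h' | h'
      · exact leT_trans' t ih h'
      · exact leT_trans' t ih (hs (leT_of_finer hf h'))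
  · exact fun h => Relation.ReflTransGen.single (Or.inl h)

lemma quotTop_self_of_symm [Finite X] {t : TopologicalSpace X} (hs : Symmetric (leT t)) :
    quotTop t t = t := by
  apply TopologicalSpace.ext
  funext U
  apply propext
  show (∀ x ∈ U, ∀ y, quotRel t t x y → y ∈ U) ↔ t.IsOpen U
  rw [isOpen_iff_leT]
  constructor
  · intro h x hx y hy
    exact h x hx y ((quotRel_iff_of_symm hs (fun _ h => h)).mpr hy)
  · intro h x hx y hy
    exact h x hx y ((quotRel_iff_of_symm hs (fun _ h => h)).mp hy)

lemma symm_of_quotTop_self {t : TopologicalSpace X} (h : quotTop t t = t) :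
    Symmetric (leT t) := by
  intro x y hxy U hU hyU
  have hU' : (quotTop t t).IsOpen U := by rw [h]; exact hU
  exact hU' y hyU x (Relation.ReflTransGen.single (Or.inr hxy))

/-- If the specialization quasi-order of `t` is an equivalence, the only
`t`-admissible topology is `t` itself. -/
lemma adm_eq_self [Finite X] {t t' : TopologicalSpace X} (he : Equivalence (leT t))
    (h : adm t' t) : t' = t := by
  obtain ⟨hf, hres, hq⟩ := h
  have hle : ∀ x y, leT t x y → leT t' x y := by
    intro x y hxy
    have h1 : quotRel t t' x y := Relation.ReflTransGen.single (Or.inl hxy)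
    have h2 : quotRel t t' y x := Relation.ReflTransGen.single (Or.inl (he.symm hxy))
    have h3 : quotRel t' t' x y := ((hq x y).1 ⟨h1, h2⟩).1
    have h4 : y ∈ @connectedComponent X t' x := mem_connectedComponent_of_quotRel_self t' h3
    have hY := hres (@connectedComponent X t' x) (@isConnected_connectedComponent X t' x)
    intro U hU hxU
    have hxC : x ∈ @connectedComponent X t' x := @mem_connectedComponent X t' x
    have hopen : (restrictT t' (@connectedComponent X t' x)).IsOpen
        (Subtype.val ⁻¹' U) := ⟨U, hU, rfl⟩
    rw [hY] at hopen
    obtain ⟨V, hV, hVe⟩ := hopen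
    have hxV : x ∈ V := by
      have : (⟨x, hxC⟩ : @connectedComponent X t' x) ∈ Subtype.val ⁻¹' V := by
        rw [hVe]; exact hxU
      exact this
    have hyV : y ∈ V := hxy V hV hxV
    have : (⟨y, h4⟩ : @connectedComponent X t' x) ∈ Subtype.val ⁻¹' V := hyV
    rw [hVe] at this
    exact this
  have hle' : ∀ x y, leT t' x y ↔ leT t x y :=
    fun x y => ⟨leT_of_finer hf, hle x y⟩
  apply TopologicalSpace.ext
  funext U
  apply propext
  show t'.IsOpen U ↔ t.IsOpen U
  rw [isOpen_iff_leT t' U, isOpen_iff_leT t U]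
  constructor
  · intro h x hx y hy; exact h x hx y ((hle' x y).mpr hy)
  · intro h x hx y hy; exact h x hx y ((hle' x y).mp hy)

/-- Part 2, forward direction. -/
lemma restrict_component_top [Finite X] {t : TopologicalSpace X}
    (he : Equivalence (leT t)) (x : X) :
    restrictT t (@connectedComponent X t x) = (⊤ : TopologicalSpace _) := by
  letI := t
  set S : Set X := {y | leT t x y} with hS
  have hSopen : IsOpen S := by
    rw [show IsOpen S ↔ t.IsOpen S from Iff.rfl, isOpen_iff_leT]
    exact fun a ha y hy => he.trans ha hy
  have hScl : IsClosed S := by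
    rw [← isOpen_compl_iff, show IsOpen Sᶜ ↔ t.IsOpen Sᶜ from Iff.rfl, isOpen_iff_leT]
    intro a ha y hy hyS
    exact ha (he.trans hyS (he.symm hy))
  have hxS : x ∈ S := he.refl x
  have hSpc : IsPreconnected S := by
    intro U V hU hV _ h1 h2
    obtain ⟨a, haS, haU⟩ := h1
    obtain ⟨b, hbS, hbV⟩ := h2
    have hxU : x ∈ U := he.symm haS U hU haU
    have hxV : x ∈ V := he.symm hbS V hV hbV
    exact ⟨x, hxS, hxU, hxV⟩
  have hCS : connectedComponent x = S := by
    apply Set.Subset.antisymm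
    · exact IsClopen.connectedComponent_subset ⟨hScl, hSopen⟩ hxS
    · exact hSpc.subset_connectedComponent hxS
  rw [eq_top_iff]
  intro W hW
  rw [TopologicalSpace.isOpen_top_iff]
  obtain ⟨V, hV, hVe⟩ := hW
  rcases Set.eq_empty_or_nonempty W with hWe | ⟨⟨a, haC⟩, haW⟩
  · exact Or.inl hWe
  · right
    apply Set.eq_univ_of_forall
    rintro ⟨b, hbC⟩
    have haV : a ∈ V := by rw [← hVe] at haW; exact haW
    rw [hCS] at haC hbC
    have hab : leT t a b := he.trans (he.symm haC) hbC
    have hbV : b ∈ V := hab V hV haV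
    show (⟨b, _⟩ : connectedComponent x) ∈ W
    rw [← hVe]
    exact hbV

/-- Part 2, backward direction. -/
lemma symm_of_restrict_component_top {t : TopologicalSpace X}
    (h : ∀ x : X, restrictT t (@connectedComponent X t x) = (⊤ : TopologicalSpace _)) :
    Symmetric (leT t) := by
  intro x y hxy U hU hyU
  have hyC : y ∈ @connectedComponent X t x := mem_connectedComponent_of_leT t hxy
  have hxC : x ∈ @connectedComponent X t x := @mem_connectedComponent X t x
  have hopen : (restrictT t (@connectedComponent X t x)).IsOpen
      (Subtype.val ⁻¹' U) := ⟨U, hU, rfl⟩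
  rw [h x] at hopen
  rcases (TopologicalSpace.isOpen_top_iff _).mp hopen with he | he
  · exact absurd (show (⟨y, hyC⟩ : @connectedComponent X t x) ∈ Subtype.val ⁻¹' U from hyU)
      (he ▸ Set.notMem_empty _)
  · have : (⟨x, hxC⟩ : @connectedComponent X t x) ∈ Subtype.val ⁻¹' U := by
      rw [he]; trivial
    exact this

lemma equivalence_iff_symm (t : TopologicalSpace X) :
    Equivalence (leT t) ↔ Symmetric (leT t) :=
  ⟨fun h _ _ => h.symm, fun hs =>
    ⟨leT_refl' t, fun h => hs h, fun h1 h2 => leT_trans' t h1 h2⟩⟩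

/-- Generic helpers (instance synthesis at the concrete tensor types is
problematic, so we instantiate these generic lemmas explicitly). -/
lemma linearEquiv_map_sum {R A B ι : Type*} [CommSemiring R] [AddCommMonoid A]
    [AddCommMonoid B] [Module R A] [Module R B] (F : A ≃ₗ[R] B) (s : Finset ι)
    (f : ι → A) : F (∑ i ∈ s, f i) = ∑ i ∈ s, F (f i) :=
  map_sum F f s

lemma linearEquiv_map_zero {R A B : Type*} [CommSemiring R] [AddCommMonoid A]
    [AddCommMonoid B] [Module R A] [Module R B] (F : A ≃ₗ[R] B) : F 0 = 0 :=
  map_zero F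

lemma linearEquiv_inj {R A B : Type*} [CommSemiring R] [AddCommMonoid A]
    [AddCommMonoid B] [Module R A] [Module R B] (F : A ≃ₗ[R] B) {x y : A}
    (h : F x = F y) : x = y :=
  F.injective h

/-- The key computation of `GamFun`. -/
lemma gamFun_eq_iff [Finite X] (t : TopologicalSpace X) :
    GamFun t = (Finsupp.single t (1 : ℚ)) ⊗ₜ[ℚ] (Finsupp.single t (1 : ℚ)) ↔
      ((∀ a, adm a t → a = t) ∧ quotTop t t = t) := by
  classical
  letI : Fintype (TopologicalSpace X) := Fintype.ofFinite _
  set F := finsuppTensorFinsupp' ℚ (TopologicalSpace X) (TopologicalSpace X) with hF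
  have hsum : F (GamFun t) = ∑ t' : TopologicalSpace X,
      (if adm t' t then
        Finsupp.single (t', quotTop t t') (1 : ℚ) else 0) := by
    rw [GamFun, finsum_eq_sum_of_fintype, linearEquiv_map_sum F]
    apply Finset.sum_congr rfl
    intro t' _
    rw [finsum_eq_if]
    split_ifs with h
    · rw [hF, finsuppTensorFinsupp'_single_tmul_single, one_mul]
    · exact linearEquiv_map_zero F
  have hRHS : F ((Finsupp.single t (1 : ℚ)) ⊗ₜ[ℚ] (Finsupp.single t (1 : ℚ))) =
      Finsupp.single (t, t) (1 : ℚ) := by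
    rw [hF, finsuppTensorFinsupp'_single_tmul_single, one_mul]
  have hmain : (∑ t' : TopologicalSpace X,
      (if adm t' t then Finsupp.single (t', quotTop t t') (1 : ℚ) else 0)) =
        Finsupp.single (t, t) (1 : ℚ) ↔
      ((∀ a, adm a t → a = t) ∧ quotTop t t = t) := by
    constructor
    · intro heq3
      have key : ∀ a, adm a t → a = t ∧ quotTop t a = t := by
        intro a ha
        have heval := DFunLike.congr_fun heq3 (a, quotTop t a)
        rw [Finsupp.finset_sum_apply, Finset.sum_eq_single a] at heval
        · rw [if_pos ha, Finsupp.single_apply, if_pos rfl] at heval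
          have hpair : (t, t) = (a, quotTop t a) := by
            by_contra hne
            rw [Finsupp.single_apply, if_neg hne] at heval
            exact one_ne_zero heval
          obtain ⟨h1, h2⟩ := Prod.mk.injEq _ _ _ _ ▸ hpair
          exact ⟨h1.symm, h1 ▸ h2.symm⟩
        · intro b _ hb
          split_ifs with hbt
          · rw [Finsupp.single_apply, if_neg (by simp [hb])]
          · rfl
        · intro habs
          exact absurd (Finset.mem_univ a) habs
      refine ⟨fun a ha => (key a ha).1, (key t (adm_self t)).2⟩
    · rintro ⟨huniq, hqt⟩
      rw [Finset.sum_eq_single t]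
      · rw [if_pos (adm_self t), hqt]
      · intro b _ hb
        rw [if_neg (fun hbt => hb (huniq b hbt))]
      · intro habs
        exact absurd (Finset.mem_univ t) habs
  constructor
  · intro heq
    exact hmain.mp (by rw [← hsum, heq, hRHS])
  · intro h
    exact linearEquiv_inj F (by rw [hsum, hRHS]; exact hmain.mpr h)

/-- `T` is group-like for the internal coproduct iff its specialization
quasi-order is an equivalence, iff its restriction to each connected component
is the coarse topology. -/
theorem grouplike_iff_equivalence [Finite X] (t : TopologicalSpace X) :
    (GamFun t = (Finsupp.single t (1 : ℚ)) ⊗ₜ[ℚ] (Finsupp.single t (1 : ℚ)) ↔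
      Equivalence (leT t)) ∧
    (Equivalence (leT t) ↔
      ∀ x : X, restrictT t (@connectedComponent X t x) = (⊤ : TopologicalSpace _)) := by
  constructor
  · rw [gamFun_eq_iff]
    constructor
    · intro ⟨_, hqt⟩
      exact (equivalence_iff_symm t).mpr (symm_of_quotTop_self hqt)
    · intro he
      exact ⟨fun a ha => adm_eq_self he ha,
        quotTop_self_of_symm ((equivalence_iff_symm t).mp he)⟩
  · constructor
    · exact fun he x => restrict_component_top he x
    · exact fun h => (equivalence_iff_symm t).mpr (symm_of_restrict_component_top h)
end
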